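/- (Proposition 4.15, computation of Ad_f for the family of curves with extraspecial automorphism group.) Let n ≥ 1, let t_0, …, t_{n−1} ∈ k with t_0 = 0 in case p = 2, set t_n := 1, and let f(X) := Σ_{i=0}^{n} t_i X^{1+p^i}. Then S(f) = {y ∈ k : Σ_{i=0}^{n} ( t_i^{p^{n−i}} y^{p^{n−i}} + t_i^{p^n} y^{p^{n+i}} ) = 0}, and this set has exactly p^{2n} elements; equivalently, |G_{∞,1}(f)| = p^{2n+1}. -/

import Mathlib

/-!
For `f = Σ tᵢ X^(1+pⁱ)` the polynomial `f(X+y) - f(X) - f(y)` is the linearized polynomial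
`Σⱼ cⱼ X^(pʲ)` with `cⱼ = tⱼ y`, plus `(Σᵢ tᵢ y^(pⁱ)) X`. For any polynomial `Q`, the quantity
`Σ_{j ≤ n} (coeff Q (pʲ))^(p^(n-j))` telescopes to `coeff P (pⁿ)` when `Q = P - P^p`, and
this coefficient vanishes for degree reasons when `deg Q ≤ pⁿ`; conversely, the partial sums
`aⱼ = Σ_{l ≤ j} c_l^(p^(j-l))` are the coefficients of an explicit `P` as soon as `aₙ = 0`.
So `S(f)` is the zero set of `Ad_f(y) = aₙ(y)`, a polynomial of degree `p^(2n)` whose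
derivative is the constant `tₙ = 1`; hence it has `p^(2n)` distinct roots.
-/

open Polynomial

def Sf (p : ℕ) {k : Type*} [Field k] (f : k[X]) : Set k :=
  {y | ∃ P : k[X], P.coeff 0 = 0 ∧
    f.comp (X + C y) - f - C (f.eval y) = P - P ^ p}

open Finset

section Linearized

variable {k : Type*} [CommRing k] (p : ℕ)

noncomputable def linearizedPoly (n : ℕ) (c : ℕ → k) : k[X] :=
  ∑ j ∈ range (n + 1), C (c j) * X ^ p ^ j

def frobSum (c : ℕ → k) (n : ℕ) : k := ∑ j ∈ range (n + 1), c j ^ p ^ (n - j)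

variable {p}

lemma linearizedPoly_succ (n : ℕ) (c : ℕ → k) :
    linearizedPoly p (n + 1) c = linearizedPoly p n c + C (c (n + 1)) * X ^ p ^ (n + 1) :=
  sum_range_succ _ _

lemma linearizedPoly_add (n : ℕ) (c d : ℕ → k) :
    linearizedPoly p n (c + d) = linearizedPoly p n c + linearizedPoly p n d := by
  simp only [linearizedPoly, Pi.add_apply, map_add, add_mul, sum_add_distrib]

lemma linearizedPoly_single_zero (n : ℕ) (a : k) :
    linearizedPoly p n (Pi.single 0 a) = C a * X := by
  rw [linearizedPoly, sum_eq_single 0 (fun j _ hj => by simp [hj]) (by simp)]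
  simp

lemma coeff_linearizedPoly (hp : 1 < p) {n j : ℕ} (c : ℕ → k) (hj : j ≤ n) :
    (linearizedPoly p n c).coeff (p ^ j) = c j := by
  rw [linearizedPoly, finsetSum_coeff, sum_eq_single j]
  · simp
  · intro i _ hij
    rw [coeff_C_mul_X_pow, if_neg fun h => hij (Nat.pow_right_injective hp h).symm]
  · simp [hj]

lemma coeff_linearizedPoly_zero (hp : p ≠ 0) (n : ℕ) (c : ℕ → k) :
    (linearizedPoly p n c).coeff 0 = 0 := by
  rw [linearizedPoly, finsetSum_coeff]
  exact sum_eq_zero fun j _ => by rw [coeff_C_mul_X_pow, if_neg (pow_ne_zero j hp).symm]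

lemma natDegree_linearizedPoly_le (hp : 0 < p) (n : ℕ) (c : ℕ → k) :
    (linearizedPoly p n c).natDegree ≤ p ^ n :=
  natDegree_sum_le_of_forall_le _ _ fun _ hj => (natDegree_C_mul_X_pow_le _ _).trans <|
    Nat.pow_le_pow_right hp (Nat.lt_succ_iff.mp (mem_range.mp hj))

lemma linearizedPoly_monic (hp : 1 < p) {n : ℕ} {c : ℕ → k} (hc : c n = 1) :
    (linearizedPoly p n c).Monic := by
  cases n with
  | zero => simp [linearizedPoly, hc]
  | succ n =>
    rw [linearizedPoly_succ, hc, map_one, one_mul, add_comm]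
    refine monic_X_pow_add (degree_le_natDegree.trans_lt ?_)
    exact_mod_cast (natDegree_linearizedPoly_le (by omega) n c).trans_lt
      (Nat.pow_lt_pow_right hp n.lt_succ_self)

lemma natDegree_linearizedPoly [Nontrivial k] (hp : 1 < p) {n : ℕ} {c : ℕ → k}
    (hc : c n = 1) : (linearizedPoly p n c).natDegree = p ^ n := by
  refine le_antisymm (natDegree_linearizedPoly_le (by omega) n c) (le_natDegree_of_ne_zero ?_)
  rw [coeff_linearizedPoly hp c le_rfl, hc]
  exact one_ne_zero

lemma coeff_eq_zero_of_natDegree_sub_pow_le [IsDomain k] (hp : 1 < p) {P : k[X]} {n : ℕ}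
    (h : (P - P ^ p).natDegree ≤ p ^ n) : P.coeff (p ^ n) = 0 := by
  by_contra hne
  have hd : p ^ n ≤ P.natDegree := le_natDegree_of_ne_zero hne
  have hlt : P.natDegree < p * P.natDegree :=
    lt_mul_left ((pow_pos (by omega) n).trans_le hd) hp
  have hsub : (P - P ^ p).natDegree = p * P.natDegree := by
    rw [natDegree_sub_eq_right_of_natDegree_lt (by rwa [natDegree_pow]), natDegree_pow]
  omega

lemma frobSum_congr {c d : ℕ → k} {n : ℕ} (h : ∀ j ≤ n, c j = d j) :
    frobSum p c n = frobSum p d n :=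
  sum_congr rfl fun j hj => by rw [h j (Nat.lt_succ_iff.mp (mem_range.mp hj))]

lemma frobSum_single_zero (hp : p ≠ 0) (a : k) (n : ℕ) :
    frobSum p (Pi.single 0 a) n = a ^ p ^ n := by
  rw [frobSum, sum_eq_single 0 (fun j _ hj => by simp [hj, hp]) (by simp)]
  simp

lemma natDegree_frobSum_le (hp : 0 < p) {c : ℕ → k[X]} {n d : ℕ}
    (hc : ∀ j ≤ n, (c j).natDegree ≤ d) : (frobSum p c n).natDegree ≤ p ^ n * d :=
  natDegree_sum_le_of_forall_le _ _ fun j hj => by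
    have hj : j ≤ n := Nat.lt_succ_iff.mp (mem_range.mp hj)
    exact natDegree_pow_le.trans <|
      Nat.mul_le_mul (Nat.pow_le_pow_right hp (Nat.sub_le n j)) (hc j hj)

lemma derivative_pow_char_pow [CharP k p] (P : k[X]) {m : ℕ} (hm : m ≠ 0) :
    derivative (P ^ p ^ m) = 0 := by
  rw [derivative_pow, Nat.cast_pow, CharP.cast_eq_zero, zero_pow hm, map_zero, zero_mul, zero_mul]

lemma derivative_frobSum [CharP k p] (c : ℕ → k[X]) (n : ℕ) :
    derivative (frobSum p c n) = derivative (c n) := by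
  rw [frobSum, sum_range_succ, Nat.sub_self, pow_zero, pow_one, derivative_add, derivative_sum,
    sum_eq_zero, zero_add]
  exact fun j hj => derivative_pow_char_pow _ (Nat.sub_ne_zero_of_lt (mem_range.mp hj))

variable [Fact p.Prime] [CharP k p]

lemma frobSum_succ (c : ℕ → k) (n : ℕ) :
    frobSum p c (n + 1) = frobSum p c n ^ p + c (n + 1) := by
  rw [frobSum, sum_range_succ, Nat.sub_self, pow_zero, pow_one, frobSum, sum_pow_char]
  congr 1
  refine sum_congr rfl fun j hj => ?_
  rw [← pow_mul, ← pow_succ, Nat.sub_add_comm (Nat.lt_succ_iff.mp (mem_range.mp hj))]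

lemma frobSum_add (c d : ℕ → k) (n : ℕ) :
    frobSum p (c + d) n = frobSum p c n + frobSum p d n := by
  simp only [frobSum, Pi.add_apply, add_pow_char_pow, sum_add_distrib]

lemma frobSum_sub (c d : ℕ → k) (n : ℕ) :
    frobSum p (c - d) n = frobSum p c n - frobSum p d n := by
  simp only [frobSum, Pi.sub_apply, sub_pow_char_pow, sum_sub_distrib]

lemma linearizedPoly_eq_sub_pow_add (n : ℕ) (c : ℕ → k) :
    linearizedPoly p n c =
      linearizedPoly p n (frobSum p c) - linearizedPoly p n (frobSum p c) ^ p
        + C (frobSum p c n ^ p) * X ^ p ^ (n + 1) := by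
  induction n with
  | zero => simp [linearizedPoly, frobSum, mul_pow, ← map_pow]
  | succ n ih =>
    rw [linearizedPoly_succ, ih, linearizedPoly_succ, add_pow_char, mul_pow, ← map_pow,
      ← pow_mul, ← pow_succ, frobSum_succ, map_add]
    ring

lemma coeff_pow_char_mul (P : k[X]) (m : ℕ) : (P ^ p).coeff (p * m) = P.coeff m ^ p := by
  rw [← map_frobenius_expand, coeff_map, coeff_expand_mul' (Fact.out : p.Prime).pos,
    frobenius_def]

lemma coeff_pow_char_one (P : k[X]) : (P ^ p).coeff 1 = 0 := by
  have hp : p.Prime := Fact.out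
  rw [← map_frobenius_expand, coeff_map, coeff_expand hp.pos, if_neg hp.not_dvd_one, map_zero]

lemma frobSum_coeff_pow_char (P : k[X]) (n : ℕ) :
    frobSum p (fun j => (P ^ p).coeff (p ^ j)) n =
      frobSum p (fun j => P.coeff (p ^ j)) n - P.coeff (p ^ n) := by
  induction n with
  | zero => simp [frobSum, coeff_pow_char_one]
  | succ n ih =>
    rw [frobSum_succ, ih, frobSum_succ, pow_succ', coeff_pow_char_mul, sub_pow_char]
    ring

lemma frobSum_coeff_sub_pow_char (P : k[X]) (n : ℕ) :
    frobSum p (fun j => (P - P ^ p).coeff (p ^ j)) n = P.coeff (p ^ n) := by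
  have hcoeff : (fun j => (P - P ^ p).coeff (p ^ j)) =
      (fun j => P.coeff (p ^ j)) - fun j => (P ^ p).coeff (p ^ j) :=
    funext fun j => coeff_sub _ _ _
  rw [hcoeff, frobSum_sub, frobSum_coeff_pow_char, sub_sub_cancel]

theorem exists_sub_pow_char_eq_linearizedPoly_iff [IsDomain k] (n : ℕ) (c : ℕ → k) :
    (∃ P : k[X], P.coeff 0 = 0 ∧ linearizedPoly p n c = P - P ^ p) ↔ frobSum p c n = 0 := by
  have hp : p.Prime := Fact.out
  constructor
  · rintro ⟨P, -, hP⟩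
    calc frobSum p c n = frobSum p (fun j => (linearizedPoly p n c).coeff (p ^ j)) n :=
          frobSum_congr fun j hj => (coeff_linearizedPoly hp.one_lt c hj).symm
      _ = P.coeff (p ^ n) := by rw [hP, frobSum_coeff_sub_pow_char]
      _ = 0 := coeff_eq_zero_of_natDegree_sub_pow_le hp.one_lt
          (hP ▸ natDegree_linearizedPoly_le hp.pos n c)
  · intro h
    refine ⟨linearizedPoly p n (frobSum p c), coeff_linearizedPoly_zero hp.ne_zero n _, ?_⟩
    rw [linearizedPoly_eq_sub_pow_add n c, h, zero_pow hp.ne_zero, map_zero, zero_mul, add_zero]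

end Linearized

section Family

variable {k : Type*} [CommRing k] (p : ℕ)

/-- The additive polynomial `Ad_f` of the paper, for `f = Σ_{i ≤ n} tᵢ X^(1+pⁱ)`. -/
noncomputable def adPoly (n : ℕ) (t : ℕ → k) : k[X] :=
  frobSum p (fun j => C (t j) * X) n + linearizedPoly p n t ^ p ^ n

variable {p}

lemma eval_adPoly (n : ℕ) (t : ℕ → k) (y : k) :
    (adPoly p n t).eval y =
      frobSum p (fun j => t j * y) n + (linearizedPoly p n t).eval y ^ p ^ n := by
  simp [adPoly, frobSum, eval_finsetSum]

lemma separable_adPoly [CharP k p] {n : ℕ} (hn : n ≠ 0) {t : ℕ → k} (htn : t n = 1) :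
    (adPoly p n t).Separable := by
  rw [separable_def, adPoly, derivative_add, derivative_frobSum, derivative_pow_char_pow _ hn,
    derivative_C_mul_X, htn, map_one, add_zero]
  exact isCoprime_one_right

lemma natDegree_adPoly [Nontrivial k] (hp : 1 < p) {n : ℕ} (hn : n ≠ 0) {t : ℕ → k}
    (htn : t n = 1) : (adPoly p n t).natDegree = p ^ (2 * n) := by
  have hpow : (linearizedPoly p n t ^ p ^ n).natDegree = p ^ (2 * n) := by
    rw [(linearizedPoly_monic hp htn).natDegree_pow, natDegree_linearizedPoly hp htn, ← pow_add,
      two_mul]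
  have hlow : (frobSum p (fun j => C (t j) * X) n).natDegree < p ^ (2 * n) := by
    refine (natDegree_frobSum_le (d := 1) (by omega) fun _ _ => ?_).trans_lt ?_
    · exact (natDegree_C_mul_le _ _).trans natDegree_X_le
    · rw [mul_one]
      exact Nat.pow_lt_pow_right hp (by omega)
  rw [adPoly, natDegree_add_eq_right_of_natDegree_lt (hpow ▸ hlow), hpow]

variable [Fact p.Prime] [CharP k p]

lemma comp_X_add_C_sub_sub_C_eval (n : ℕ) (t : ℕ → k) (y : k) :
    (∑ i ∈ range (n + 1), C (t i) * X ^ (1 + p ^ i)).comp (X + C y)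
        - ∑ i ∈ range (n + 1), C (t i) * X ^ (1 + p ^ i)
        - C ((∑ i ∈ range (n + 1), C (t i) * X ^ (1 + p ^ i)).eval y) =
      linearizedPoly p n (fun j => t j * y) + C ((linearizedPoly p n t).eval y) * X := by
  rw [Polynomial.sum_comp, eval_finsetSum, map_sum, ← sum_sub_distrib, ← sum_sub_distrib,
    linearizedPoly, linearizedPoly, eval_finsetSum, map_sum, sum_mul, ← sum_add_distrib]
  refine sum_congr rfl fun i _ => ?_
  simp only [mul_comp, C_comp, pow_comp, X_comp, eval_mul, eval_C, eval_pow, eval_X, pow_add,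
    pow_one, add_pow_char_pow, map_mul, map_pow]
  ring

lemma frobSum_mul_add_eval_linearizedPoly_pow (n : ℕ) (t : ℕ → k) (y : k) :
    frobSum p (fun j => t j * y) n + (linearizedPoly p n t).eval y ^ p ^ n =
      ∑ i ∈ range (n + 1),
        (t i ^ p ^ (n - i) * y ^ p ^ (n - i) + t i ^ p ^ n * y ^ p ^ (n + i)) := by
  simp only [frobSum, linearizedPoly, eval_finsetSum, eval_mul, eval_C, eval_pow, eval_X,
    sum_pow_char_pow, mul_pow, ← pow_mul, ← pow_add, sum_add_distrib]
  simp only [add_comm]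

end Family

lemma Sf_sum_C_mul_X_pow_one_add_pow {k : Type*} [Field k] {p : ℕ} [hp : Fact p.Prime]
    [CharP k p] (n : ℕ) (t : ℕ → k) :
    Sf p (∑ i ∈ range (n + 1), C (t i) * X ^ (1 + p ^ i)) =
      {y | (adPoly p n t).eval y = 0} := by
  ext y
  change (∃ P : k[X], _ ∧ _) ↔ _
  rw [comp_X_add_C_sub_sub_C_eval, ← linearizedPoly_single_zero n, ← linearizedPoly_add,
    exists_sub_pow_char_eq_linearizedPoly_iff, frobSum_add, frobSum_single_zero hp.out.ne_zero,
    Set.mem_ofPred_eq, eval_adPoly]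

lemma ncard_setOf_eval_eq_zero {k : Type*} [Field k] [IsAlgClosed k] {A : k[X]}
    (hA : A.Separable) : {y | A.eval y = 0}.ncard = A.natDegree := by
  classical
  have hroots : {y | A.eval y = 0} = A.roots.toFinset := by
    ext y
    simp [mem_roots hA.ne_zero]
  rw [hroots, Set.ncard_coe_finset, Multiset.toFinset_card_of_nodup (nodup_roots hA),
    IsAlgClosed.card_roots_eq_natDegree]

theorem Sf_extraspecial_family_general (p : ℕ) (hp : p.Prime)
    (k : Type*) [Field k] [IsAlgClosed k] [CharP k p]
    (n : ℕ) (hn : 1 ≤ n) (t : ℕ → k) (htn : t n = 1)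
    (f : k[X]) (hf : f = ∑ i ∈ Finset.range (n + 1), C (t i) * X ^ (1 + p ^ i)) :
    Sf p f = {y : k | ∑ i ∈ Finset.range (n + 1),
        (t i ^ p ^ (n - i) * y ^ p ^ (n - i) + t i ^ p ^ n * y ^ p ^ (n + i)) = 0} ∧
    (Sf p f).ncard = p ^ (2 * n) := by
  have := Fact.mk hp
  rw [hf, Sf_sum_C_mul_X_pow_one_add_pow]
  constructor
  · simp only [eval_adPoly, frobSum_mul_add_eval_linearizedPoly_pow]
  · rw [ncard_setOf_eval_eq_zero (separable_adPoly (by omega) htn),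
      natDegree_adPoly hp.one_lt (by omega) htn]

/-- Proposition 4.15: for `f = Σ_{i=0}^n t_i X^{1+p^i}` with `t_n = 1` (and `t_0 = 0` if
`p = 2`), the set `S(f)` is the set of roots of the additive polynomial
`Σ_i (t_i^{p^{n-i}} Y^{p^{n-i}} + t_i^{p^n} Y^{p^{n+i}})`, of cardinality `p^{2n}`;
hence `|G_{∞,1}(f)| = p^{2n+1}`. -/
theorem Sf_extraspecial_family (p : ℕ) (hp : p.Prime)
    (k : Type*) [Field k] [IsAlgClosed k] [CharP k p]
    (n : ℕ) (hn : 1 ≤ n) (t : ℕ → k) (htn : t n = 1) (ht0 : p = 2 → t 0 = 0)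
    (f : k[X]) (hf : f = ∑ i ∈ Finset.range (n + 1), C (t i) * X ^ (1 + p ^ i)) :
    Sf p f = {y : k | ∑ i ∈ Finset.range (n + 1),
        (t i ^ p ^ (n - i) * y ^ p ^ (n - i) + t i ^ p ^ n * y ^ p ^ (n + i)) = 0} ∧
    (Sf p f).ncard = p ^ (2 * n) :=
  Sf_extraspecial_family_general p hp k n hn t htn f hf
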